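/- arXiv:1104.2502 — 4 statements merged into one kernel-verified Lean document; each statement's English description precedes it below -/
import Mathlib

section
/- For an n×n Hermitian matrix A and a family of mutually orthogonal projections P₁,...,P_r summing to the identity, the eigenvalue vector of A (in non-increasing order) majorizes the eigenvalue vector of ∑ᵢ PᵢAPᵢ. -/
/-!
Ky Fan's principle: for Hermitian `H`, the sum of its `k` largest eigenvalues bounds
`re tr (H X)` for every `0 ≤ X ≤ 1` with `tr X = k`, with equality when `X` is the spectral
projection of `H` onto its top `k` eigenvectors. The pinching `𝒫 X = ∑ Pᵢ X Pᵢ` is symmetric for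
the trace pairing and maps such `X` to such `X`. So if `Q` is the top-`k` spectral projection of
`𝒫 A`, the top-`k` eigenvalue sum of `𝒫 A` is `tr (𝒫 A · Q) = tr (A · 𝒫 Q)`, which is at most the
top-`k` eigenvalue sum of `A`. Equality of the total sums is `tr (𝒫 A) = tr A`.
-/

open scoped ComplexOrder MatrixOrder
open Finset

theorem sum_mul_le_sum_of_threshold {ι : Type*} [Fintype ι] {f d : ι → ℝ} {s : Finset ι}
    {t : ℝ} (hs : ∀ i ∈ s, t ≤ f i) (hsc : ∀ i ∉ s, f i ≤ t)
    (hd : ∀ i, d i ∈ Set.Icc (0 : ℝ) 1) (hsum : ∑ i, d i = #s) :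
    ∑ i, f i * d i ≤ ∑ i ∈ s, f i := by
  classical
  -- every term `(f i - t) * (d i - 𝟙ₛ i)` is `≤ 0`, and since `∑ d = #s` they add up to the
  -- difference of the two sides
  have hterm : ∀ i, (f i - t) * (d i - if i ∈ s then 1 else 0) ≤ 0 := by
    intro i
    obtain ⟨h0, h1⟩ := hd i
    by_cases hi : i ∈ s
    · simp only [hi, if_true]; nlinarith [hs i hi]
    · simp only [hi, if_false]; nlinarith [hsc i hi]
  have hexpand : ∑ i, (f i - t) * (d i - if i ∈ s then 1 else 0)
      = ∑ i, f i * d i - ∑ i ∈ s, f i := by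
    simp only [mul_sub, sub_mul, sum_sub_distrib, ← mul_sum, hsum, mul_ite, mul_one, mul_zero,
      sum_ite_mem, univ_inter, sum_const, nsmul_eq_mul]
    ring
  linarith [sum_nonpos fun i (_ : i ∈ univ) => hterm i]

theorem Antitone.sum_mul_le_sum_filter_lt {n k : ℕ} {f d : Fin n → ℝ} (hf : Antitone f)
    (hd : ∀ i, d i ∈ Set.Icc (0 : ℝ) 1) (hsum : ∑ i, d i = #{i : Fin n | (i : ℕ) < k}) :
    ∑ i, f i * d i ≤ ∑ i ∈ {i : Fin n | (i : ℕ) < k}, f i := by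
  rcases n.eq_zero_or_pos with rfl | hn
  · simp
  -- `min k n - 1` is the last index below `k`, or `0` when `k = 0`
  refine sum_mul_le_sum_of_threshold (t := f ⟨min k n - 1, by omega⟩) (fun i hi => ?_)
    (fun i hi => ?_) hd hsum
  · simp only [mem_filter, mem_univ, true_and] at hi
    exact hf (Fin.le_def.mpr (by dsimp only; omega))
  · simp only [mem_filter, mem_univ, true_and, not_lt] at hi
    exact hf (Fin.le_def.mpr (by dsimp only; omega))

section Pinching

variable {ι R : Type*} [Fintype ι]

def pinching [NonUnitalNonAssocSemiring R] (P : ι → R) (x : R) : R := ∑ i, P i * x * P i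

theorem pinching_one [Semiring R] {P : ι → R} (hP : ∀ i, IsIdempotentElem (P i))
    (hsum : ∑ i, P i = 1) : pinching P 1 = 1 := by
  simp only [pinching, mul_one, fun i => (hP i).eq, hsum]

theorem pinching_mono [NonUnitalSemiring R] [PartialOrder R] [StarRing R] [StarOrderedRing R]
    {P : ι → R} (hP : ∀ i, IsSelfAdjoint (P i)) : Monotone (pinching P) :=
  fun _ _ hxy => sum_le_sum fun i _ => (hP i).conjugate_le_conjugate hxy

theorem pinching_mem_Icc [Semiring R] [PartialOrder R] [StarRing R] [StarOrderedRing R]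
    {P : ι → R} (hP : ∀ i, IsStarProjection (P i)) (hsum : ∑ i, P i = 1) {x : R}
    (hx : x ∈ Set.Icc 0 1) : pinching P x ∈ Set.Icc 0 1 := by
  have hmono := pinching_mono fun i => (hP i).isSelfAdjoint
  refine ⟨?_, ?_⟩
  · simpa [pinching] using hmono hx.1
  · simpa [pinching_one (fun i => (hP i).isIdempotentElem) hsum] using hmono hx.2

namespace Matrix

variable {n : Type*} [Fintype n] [CommSemiring R]

theorem trace_pinching_mul (P : ι → Matrix n n R) (A X : Matrix n n R) :
    (pinching P A * X).trace = (A * pinching P X).trace := by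
  simp only [pinching, Finset.sum_mul, Finset.mul_sum, trace_sum]
  refine sum_congr rfl fun i _ => ?_
  rw [Matrix.mul_assoc, Matrix.mul_assoc, trace_mul_comm]
  simp only [Matrix.mul_assoc]

theorem trace_pinching [DecidableEq n] {P : ι → Matrix n n R} (hP : ∀ i, IsIdempotentElem (P i))
    (hsum : ∑ i, P i = 1) (X : Matrix n n R) : (pinching P X).trace = X.trace := by
  simpa [pinching_one hP hsum] using trace_pinching_mul P X 1

end Matrix

end Pinching

namespace Matrix

variable {𝕜 n : Type*} [RCLike 𝕜] [DecidableEq n]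

theorem re_diag_mem_Icc {Y : Matrix n n 𝕜} (hY : Y ∈ Set.Icc 0 1) (j : n) :
    RCLike.re (Y j j) ∈ Set.Icc 0 1 := by
  have h0 : 0 ≤ Y j j := (nonneg_iff_posSemidef.mp hY.1).diag_nonneg
  have h1 : 0 ≤ (1 - Y) j j := (nonneg_iff_posSemidef.mp (sub_nonneg.mpr hY.2)).diag_nonneg
  rw [sub_apply, one_apply_eq, sub_nonneg] at h1
  exact ⟨(RCLike.nonneg_iff.mp h0).1, by simpa using (RCLike.le_iff_re_im.mp h1).1⟩

namespace IsHermitian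

variable [Fintype n] {A : Matrix n n 𝕜}

theorem trace_mul_eq_sum_eigenvalues_mul (hA : A.IsHermitian) (X : Matrix n n 𝕜) :
    (A * X).trace = ∑ j, (hA.eigenvalues j : 𝕜) *
      (star (hA.eigenvectorUnitary : Matrix n n 𝕜) * X * hA.eigenvectorUnitary) j j := by
  conv_lhs => rw [hA.spectral_theorem, Unitary.conjStarAlgAut_apply]
  rw [Matrix.mul_assoc, Matrix.mul_assoc, trace_mul_comm, Matrix.mul_assoc]
  simp [trace, diagonal_mul, Matrix.mul_assoc]

theorem exists_isStarProjection_trace_mul_eq (hA : A.IsHermitian) (T : Finset n) :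
    ∃ Q : Matrix n n 𝕜, IsStarProjection Q ∧ Q.trace = #T ∧
      (A * Q).trace = ∑ j ∈ T, (hA.eigenvalues j : 𝕜) := by
  set U : Matrix n n 𝕜 := (hA.eigenvectorUnitary : Matrix n n 𝕜)
  set D : Matrix n n 𝕜 := diagonal fun j => if j ∈ T then 1 else 0
  have hUU : star U * U = 1 := Unitary.coe_star_mul_self _
  have hD : IsStarProjection D := by
    rw [isStarProjection_iff', star_eq_conjTranspose, diagonal_conjTranspose, diagonal_mul_diagonal]
    constructor <;> congr 1 <;> funext j <;> split_ifs <;> simp [*]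
  refine ⟨U * D * star U, hD.map (Unitary.conjStarAlgAut 𝕜 _ hA.eigenvectorUnitary), ?_, ?_⟩
  · rw [trace_mul_cycle, hUU, Matrix.one_mul]
    simp [D, trace_diagonal, sum_ite_mem]
  · have hconj : star U * (U * D * star U) * U = D := by
      simp only [← Matrix.mul_assoc, hUU, Matrix.one_mul]
      simp only [Matrix.mul_assoc, hUU, Matrix.mul_one]
    rw [hA.trace_mul_eq_sum_eigenvalues_mul, hconj]
    simp [D, sum_ite_mem]

end IsHermitian

end Matrix

theorem Matrix.IsHermitian.re_trace_mul_le_sum_filter_lt {𝕜 : Type*} [RCLike 𝕜] {n k : ℕ}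
    {A X : Matrix (Fin n) (Fin n) 𝕜} (hA : A.IsHermitian) {σ : Equiv.Perm (Fin n)}
    (hσ : Antitone (hA.eigenvalues ∘ σ)) (hX : X ∈ Set.Icc 0 1)
    (htr : X.trace = #{i : Fin n | (i : ℕ) < k}) :
    RCLike.re (A * X).trace ≤ ∑ i ∈ {i : Fin n | (i : ℕ) < k}, hA.eigenvalues (σ i) := by
  set U : Matrix (Fin n) (Fin n) 𝕜 := (hA.eigenvectorUnitary : Matrix (Fin n) (Fin n) 𝕜)
  have hUU : star U * U = 1 := Unitary.coe_star_mul_self _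
  have hUU' : U * star U = 1 := Unitary.coe_mul_star_self _
  set Y := star U * X * U
  have hY : Y ∈ Set.Icc 0 1 :=
    ⟨star_left_conjugate_nonneg hX.1 U, by simpa [hUU] using star_left_conjugate_le_conjugate hX.2 U⟩
  have htrY : RCLike.re Y.trace = #{i : Fin n | (i : ℕ) < k} := by
    rw [trace_mul_cycle, hUU', Matrix.one_mul, htr, RCLike.natCast_re]
  calc RCLike.re (A * X).trace
      = ∑ j, hA.eigenvalues j * RCLike.re (Y j j) := by
        simp [hA.trace_mul_eq_sum_eigenvalues_mul, Y, U]
    _ = ∑ i, hA.eigenvalues (σ i) * RCLike.re (Y (σ i) (σ i)) :=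
        (Equiv.sum_comp σ fun j => hA.eigenvalues j * RCLike.re (Y j j)).symm
    _ ≤ _ := by
        refine hσ.sum_mul_le_sum_filter_lt (fun i => re_diag_mem_Icc hY _) ?_
        rw [Equiv.sum_comp σ fun j => RCLike.re (Y j j)]
        simpa [trace] using htrY

theorem pinching_majorization_general
    {n r : ℕ} {A : Matrix (Fin n) (Fin n) ℂ} (hA : A.IsHermitian)
    (P : Fin r → Matrix (Fin n) (Fin n) ℂ)
    (hproj : ∀ i, (P i).IsHermitian ∧ P i * P i = P i)
    (hsum : ∑ i, P i = 1)
    (hB : (∑ i, P i * A * P i).IsHermitian)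
    (sA sB : Fin n → ℝ)
    (hsA : ∃ σ : Equiv.Perm (Fin n), sA = hA.eigenvalues ∘ σ)
    (hsB : ∃ σ : Equiv.Perm (Fin n), sB = hB.eigenvalues ∘ σ)
    (hsA' : Antitone sA) :
    (∀ k : ℕ, ∑ i ∈ Finset.univ.filter (fun i : Fin n => (i : ℕ) < k), sB i ≤
        ∑ i ∈ Finset.univ.filter (fun i : Fin n => (i : ℕ) < k), sA i) ∧
      ∑ i, sA i = ∑ i, sB i := by
  obtain ⟨σA, rfl⟩ := hsA
  obtain ⟨σB, rfl⟩ := hsB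
  have hP : ∀ i, IsStarProjection (P i) := fun i => ⟨(hproj i).2, (hproj i).1⟩
  have hidem : ∀ i, IsIdempotentElem (P i) := fun i => (hP i).isIdempotentElem
  refine ⟨fun k => ?_, ?_⟩
  · obtain ⟨Q, hQ, htrQ, hBQ⟩ := hB.exists_isStarProjection_trace_mul_eq
      (({i : Fin n | (i : ℕ) < k} : Finset (Fin n)).map σB.toEmbedding)
    calc ∑ i ∈ {i : Fin n | (i : ℕ) < k}, hB.eigenvalues (σB i)
        = RCLike.re (pinching P A * Q).trace := by
          rw [pinching, hBQ, sum_map]; simp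
      _ = RCLike.re (A * pinching P Q).trace := by rw [Matrix.trace_pinching_mul]
      _ ≤ _ := hA.re_trace_mul_le_sum_filter_lt hsA' (pinching_mem_Icc hP hsum hQ.mem_Icc)
          (by rw [Matrix.trace_pinching hidem hsum, htrQ, card_map])
  · have htr : ∑ i, (hA.eigenvalues i : ℂ) = ∑ i, (hB.eigenvalues i : ℂ) :=
      hA.trace_eq_sum_eigenvalues.symm.trans
        ((Matrix.trace_pinching hidem hsum A).symm.trans hB.trace_eq_sum_eigenvalues)
    simp only [Function.comp_apply, Equiv.sum_comp]
    exact_mod_cast htr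

/-- For an `n × n` Hermitian matrix `A` and mutually orthogonal
projections `P 1, …, P r` summing to the identity, the eigenvalue vector of `A`
(in non-increasing order) majorizes that of `∑ i, P i * A * P i`.
Majorization is phrased via antitone rearrangements `sA`, `sB` of the two
eigenvalue vectors: every partial sum of `sA` dominates that of `sB`, with
equality for the total sum. -/
theorem pinching_majorization
    {n r : ℕ} {A : Matrix (Fin n) (Fin n) ℂ} (hA : A.IsHermitian)
    (P : Fin r → Matrix (Fin n) (Fin n) ℂ)
    (hproj : ∀ i, (P i).IsHermitian ∧ P i * P i = P i)
    (horth : ∀ i j, i ≠ j → P i * P j = 0)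
    (hsum : ∑ i, P i = 1)
    (hB : (∑ i, P i * A * P i).IsHermitian)
    (sA sB : Fin n → ℝ)
    (hsA : ∃ σ : Equiv.Perm (Fin n), sA = hA.eigenvalues ∘ σ)
    (hsB : ∃ σ : Equiv.Perm (Fin n), sB = hB.eigenvalues ∘ σ)
    (hsA' : Antitone sA) (hsB' : Antitone sB) :
    (∀ k : ℕ, ∑ i ∈ Finset.univ.filter (fun i : Fin n => (i : ℕ) < k), sB i ≤
        ∑ i ∈ Finset.univ.filter (fun i : Fin n => (i : ℕ) < k), sA i) ∧
      ∑ i, sA i = ∑ i, sB i :=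
  pinching_majorization_general hA P hproj hsum hB sA sB hsA hsB hsA'
end

section
/- For any two orthogonal projectors Π and Δ on a finite-dimensional complex inner product space V, there exists an orthogonal decomposition of V into one-dimensional and two-dimensional subspaces each of which is invariant under both Π and Δ; moreover, on each two-dimensional subspace in the decomposition, both Π and Δ restrict to rank-one projectors. -/
/-!
Let `K` be a subspace invariant under both projections `p` and `q`. The operator `p q` leaves
`K ⊓ range p` invariant, so it has an eigenvector `v` there. Then `p v = v` and
`p (q v) ∈ ℂ v`, so `span {v, q v}` is invariant under both projections, which map it onto the
lines `ℂ v` and `ℂ (q v)`. If `K ⊓ range p = ⊥`, the roles of `p` and `q` are swapped, and if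
both intersections are trivial, both projections vanish on `K` and any line in `K` is a piece.
The projections being self-adjoint, the orthogonal complement of a piece inside `K` is again
invariant, so induction on `finrank K` splits off pieces until nothing is left.
-/
open scoped InnerProductSpace
open Module Module.End Submodule

theorem Fin.iSup_cons {α : Type*} [CompleteLattice α] {n : ℕ} (a : α) (f : Fin n → α) :
    ⨆ i, (Fin.cons a f : Fin (n + 1) → α) i = a ⊔ ⨆ i, f i :=
  le_antisymm (iSup_le (Fin.cases le_sup_left fun i => le_sup_of_le_right (le_iSup f i)))
    (sup_le (le_iSup_of_le 0 le_rfl) (iSup_le fun i => le_iSup_of_le i.succ le_rfl))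

theorem LinearMap.IsSymmetric.orthogonal_mem_invtSubmodule {𝕜 E : Type*} [RCLike 𝕜]
    [NormedAddCommGroup E] [InnerProductSpace 𝕜 E] {T : E →ₗ[𝕜] E} (hT : T.IsSymmetric)
    {U : Submodule 𝕜 E} (hU : U ∈ invtSubmodule T) : Uᗮ ∈ invtSubmodule T :=
  fun x hx u hu => (hT u x).symm.trans (hx (T u) (hU hu))

section Field

variable {𝕜 V : Type*} [Field 𝕜] [AddCommGroup V] [Module 𝕜 V]

theorem Module.End.exists_hasEigenvector_mem_of_mem_invtSubmodule [IsAlgClosed 𝕜]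
    [FiniteDimensional 𝕜 V] {f : End 𝕜 V} {S : Submodule 𝕜 V} (hS : S ≠ ⊥)
    (hfS : S ∈ invtSubmodule f) : ∃ c, ∃ v ∈ S, f.HasEigenvector c v := by
  have : Nontrivial S := nontrivial_iff_ne_bot.mpr hS
  obtain ⟨c, hc⟩ := exists_eigenvalue (f.restrict hfS)
  obtain ⟨w, hw⟩ := hc.exists_hasEigenvector
  refine ⟨c, w, w.2, mem_eigenspace_iff.mpr (congrArg Subtype.val hw.apply_eq_smul), ?_⟩
  exact_mod_cast hw.2

theorem Module.End.mem_invtSubmodule_of_le_of_inf_range_eq_bot {f : End 𝕜 V}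
    {K W : Submodule 𝕜 V} (hKf : K ∈ invtSubmodule f) (hf : K ⊓ LinearMap.range f = ⊥)
    (hWK : W ≤ K) : W ∈ invtSubmodule f := fun x hx => by
  have hfx : f x = 0 :=
    (Submodule.eq_bot_iff _).mp hf _ ⟨hKf (hWK hx), LinearMap.mem_range_self f x⟩
  exact mem_comap.mpr (hfx ▸ zero_mem W)

structure IsJordanPiece (p q : End 𝕜 V) (W : Submodule 𝕜 V) : Prop where
  finrank_eq_one_or_two : finrank 𝕜 W = 1 ∨ finrank 𝕜 W = 2
  mem_invtSubmodule_left : W ∈ invtSubmodule p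
  mem_invtSubmodule_right : W ∈ invtSubmodule q
  finrank_map_left : finrank 𝕜 W = 2 → finrank 𝕜 (W.map p) = 1
  finrank_map_right : finrank 𝕜 W = 2 → finrank 𝕜 (W.map q) = 1

namespace IsJordanPiece

variable {p q : End 𝕜 V} {W : Submodule 𝕜 V}

theorem symm (h : IsJordanPiece p q W) : IsJordanPiece q p W :=
  ⟨h.finrank_eq_one_or_two, h.mem_invtSubmodule_right, h.mem_invtSubmodule_left,
    h.finrank_map_right, h.finrank_map_left⟩

theorem one_le_finrank (h : IsJordanPiece p q W) : 1 ≤ finrank 𝕜 W := by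
  rcases h.finrank_eq_one_or_two with h | h <;> omega

theorem of_finrank_eq_one (hW : finrank 𝕜 W = 1) (hp : W ∈ invtSubmodule p)
    (hq : W ∈ invtSubmodule q) : IsJordanPiece p q W :=
  ⟨.inl hW, hp, hq, by omega, by omega⟩

theorem span_pair (hq : IsIdempotentElem q) {v : V} (hv : v ≠ 0) (hpv : p v = v) {c : 𝕜}
    (hpqv : p (q v) = c • v) : IsJordanPiece p q (span 𝕜 {v, q v}) := by
  have hqqv : q (q v) = q v := congrArg (· v) hq
  have hmap_p : (span 𝕜 {v, q v}).map p = span 𝕜 {v} := by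
    rw [map_span, Set.image_pair, hpv, hpqv, Set.pair_comm,
      span_insert_eq_span (smul_mem _ _ (mem_span_singleton_self v))]
  have hmap_q : (span 𝕜 {v, q v}).map q = span 𝕜 {q v} := by
    rw [map_span, Set.image_pair, hqqv, Set.pair_eq_singleton]
  have : FiniteDimensional 𝕜 (span 𝕜 {v, q v}) := .span_of_finite 𝕜 (Set.toFinite _)
  have hle : finrank 𝕜 (span 𝕜 {v, q v}) ≤ 2 := by
    classical
    exact (finrank_span_le_card _).trans (by simpa using Finset.card_le_two)
  have hpos : 1 ≤ finrank 𝕜 (span 𝕜 {v, q v}) :=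
    one_le_finrank_iff.mpr ((Submodule.ne_bot_iff _).mpr ⟨v, subset_span (by simp), hv⟩)
  refine ⟨by omega, ?_, ?_, fun _ => ?_, fun h2 => ?_⟩
  · exact (mem_invtSubmodule_iff_map_le _).mpr (hmap_p ▸ span_mono (by simp))
  · exact (mem_invtSubmodule_iff_map_le _).mpr (hmap_q ▸ span_mono (by simp))
  · rw [hmap_p, finrank_span_singleton hv]
  · have hqv : q v ≠ 0 := by
      rintro hqv
      rw [hqv, Set.pair_comm, span_insert_zero, finrank_span_singleton hv] at h2
      omega
    rw [hmap_q, finrank_span_singleton hqv]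

end IsJordanPiece

variable [IsAlgClosed 𝕜] [FiniteDimensional 𝕜 V] {p q : End 𝕜 V} {K : Submodule 𝕜 V}

theorem exists_isJordanPiece_le_of_inf_range_ne_bot (hp : IsIdempotentElem p)
    (hq : IsIdempotentElem q) (hKp : K ∈ invtSubmodule p) (hKq : K ∈ invtSubmodule q)
    (hK : K ⊓ LinearMap.range p ≠ ⊥) : ∃ W ≤ K, IsJordanPiece p q W := by
  have hinv : K ⊓ LinearMap.range p ∈ invtSubmodule (p * q) :=
    fun x hx => ⟨hKp (hKq hx.1), LinearMap.mem_range_self p (q x)⟩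
  obtain ⟨c, v, hvS, hv⟩ := exists_hasEigenvector_mem_of_mem_invtSubmodule hK hinv
  have hpv : p v = v := (LinearMap.IsIdempotentElem.mem_range_iff hp).mp hvS.2
  refine ⟨_, span_le.mpr ?_, IsJordanPiece.span_pair hq hv.2 hpv hv.apply_eq_smul⟩
  rintro x (rfl | rfl)
  exacts [hvS.1, hKq hvS.1]

theorem exists_isJordanPiece_le (hp : IsIdempotentElem p) (hq : IsIdempotentElem q)
    (hKp : K ∈ invtSubmodule p) (hKq : K ∈ invtSubmodule q) (hK : K ≠ ⊥) :
    ∃ W ≤ K, IsJordanPiece p q W := by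
  by_cases hKrp : K ⊓ LinearMap.range p = ⊥
  · by_cases hKrq : K ⊓ LinearMap.range q = ⊥
    · obtain ⟨v, hvK, hv⟩ := exists_mem_ne_zero_of_ne_bot hK
      have hvK' : span 𝕜 {v} ≤ K := span_le.mpr (by simpa using hvK)
      exact ⟨span 𝕜 {v}, hvK', .of_finrank_eq_one (finrank_span_singleton hv)
        (mem_invtSubmodule_of_le_of_inf_range_eq_bot hKp hKrp hvK')
        (mem_invtSubmodule_of_le_of_inf_range_eq_bot hKq hKrq hvK')⟩
    · obtain ⟨W, hWK, hW⟩ := exists_isJordanPiece_le_of_inf_range_ne_bot hq hp hKq hKp hKrq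
      exact ⟨W, hWK, hW.symm⟩
  · exact exists_isJordanPiece_le_of_inf_range_ne_bot hp hq hKp hKq hKrp

end Field

section InnerProductSpace

variable {V : Type*} [NormedAddCommGroup V] [InnerProductSpace ℂ V] [FiniteDimensional ℂ V]

theorem exists_pairwise_isOrtho_isJordanPiece {p q : V →ₗ[ℂ] V}
    (hp : IsIdempotentElem p) (hp_sym : p.IsSymmetric)
    (hq : IsIdempotentElem q) (hq_sym : q.IsSymmetric)
    (K : Submodule ℂ V) (hKp : K ∈ invtSubmodule p) (hKq : K ∈ invtSubmodule q) :
    ∃ (k : ℕ) (W : Fin k → Submodule ℂ V),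
      Pairwise (fun i j => W i ⟂ W j) ∧ ⨆ i, W i = K ∧ ∀ i, IsJordanPiece p q (W i) := by
  induction hn : finrank ℂ K using Nat.strong_induction_on generalizing K with
  | _ n ih =>
  rcases eq_or_ne K ⊥ with rfl | hK
  · exact ⟨0, Fin.elim0, fun i => i.elim0, iSup_of_empty _, fun i => i.elim0⟩
  obtain ⟨B, hBK, hB⟩ := exists_isJordanPiece_le hp hq hKp hKq hK
  have hdim : finrank ℂ (Bᗮ ⊓ K : Submodule ℂ V) < n := by
    have := finrank_add_inf_finrank_orthogonal hBK
    have := hB.one_le_finrank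
    omega
  obtain ⟨k, W, hW_orth, hW_sup, hW⟩ := ih _ hdim (Bᗮ ⊓ K)
    (invtSubmodule.inf_mem (hp_sym.orthogonal_mem_invtSubmodule hB.mem_invtSubmodule_left) hKp)
    (invtSubmodule.inf_mem (hq_sym.orthogonal_mem_invtSubmodule hB.mem_invtSubmodule_right) hKq)
    rfl
  have hW_B : ∀ i, W i ⟂ B := fun i => (le_iSup W i).trans (hW_sup ▸ inf_le_left)
  refine ⟨k + 1, Fin.cons B W, pairwise_fin_succ_iff.mpr ⟨hW_B, fun i => (hW_B i).symm, hW_orth⟩,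
    ?_, Fin.cases hB hW⟩
  rw [Fin.iSup_cons, hW_sup, sup_orthogonal_inf_of_hasOrthogonalProjection hBK]

end InnerProductSpace

/-- **Jordan's lemma on two projections.** For any two orthogonal
projectors `Π` and `Δ` (symmetric idempotent linear maps) on a finite-dimensional
complex inner product space `V`, there is an orthogonal decomposition of `V`
into one- and two-dimensional subspaces, each invariant under both `Π` and `Δ`;
moreover, on each two-dimensional subspace of the decomposition, both `Π` and
`Δ` restrict to rank-one projectors. -/
theorem jordan_two_projections
    {V : Type*} [NormedAddCommGroup V] [InnerProductSpace ℂ V]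
    [FiniteDimensional ℂ V]
    (p d : V →ₗ[ℂ] V)
    (hp_idem : p ∘ₗ p = p) (hp_sym : LinearMap.IsSymmetric p)
    (hd_idem : d ∘ₗ d = d) (hd_sym : LinearMap.IsSymmetric d) :
    ∃ (k : ℕ) (W : Fin k → Submodule ℂ V),
      (∀ i j, i ≠ j → ∀ x ∈ W i, ∀ y ∈ W j, ⟪x, y⟫_ℂ = 0) ∧
      (⨆ i, W i) = ⊤ ∧
      (∀ i, Module.finrank ℂ (W i) = 1 ∨ Module.finrank ℂ (W i) = 2) ∧
      (∀ i, ∀ x ∈ W i, p x ∈ W i) ∧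
      (∀ i, ∀ x ∈ W i, d x ∈ W i) ∧
      (∀ i, Module.finrank ℂ (W i) = 2 →
        Module.finrank ℂ (Submodule.map p (W i)) = 1 ∧
        Module.finrank ℂ (Submodule.map d (W i)) = 1) := by
  obtain ⟨k, W, hW_orth, hW_sup, hW⟩ := exists_pairwise_isOrtho_isJordanPiece hp_idem hp_sym
    hd_idem hd_sym ⊤ (invtSubmodule.top_mem p) (invtSubmodule.top_mem d)
  exact ⟨k, W, fun i j hij => isOrtho_iff_inner_eq.mp (hW_orth hij), hW_sup,
    fun i => (hW i).finrank_eq_one_or_two, fun i => (hW i).mem_invtSubmodule_left,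
    fun i => (hW i).mem_invtSubmodule_right,
    fun i h2 => ⟨(hW i).finrank_map_left h2, (hW i).finrank_map_right h2⟩⟩
end

section
/- Let P and Q be 2×2 positive semidefinite matrices with ‖Q‖ ≥ 1, ‖P+Q‖ ≤ 1+ε₁, λ₂(P+Q) < 1, tr(Π^{P+Q}P) ≥ ε²·tr(Π^{P+Q}(P+Q)), and tr(Π^Q Q) ≥ (1-ε₁⁸)·tr(Π^{P+Q}(P+Q)), where ε₁ = 3ε/ln n ≤ ε and ε is sufficiently small. Then λ₂(P+Q) > 1 - ε₁³/9. -/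
open scoped ComplexOrder

/-- The `ℓ²`-operator norm of a complex square matrix. -/
noncomputable def opNorm {n : ℕ} (M : Matrix (Fin n) (Fin n) ℂ) : ℝ :=
  ‖Matrix.toEuclideanCLM (𝕜 := ℂ) M‖

/-- The spectral projection of a Hermitian matrix onto the span of its
eigenvectors with eigenvalue at least `1`. -/
noncomputable def specProj {n : ℕ} {M : Matrix (Fin n) (Fin n) ℂ}
    (hM : M.IsHermitian) : Matrix (Fin n) (Fin n) ℂ :=
  ∑ i ∈ Finset.univ.filter (fun i => 1 ≤ hM.eigenvalues i),
    Matrix.vecMulVec (hM.eigenvectorBasis i) (star (hM.eigenvectorBasis i))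

/-- The smaller eigenvalue `λ₂` of a `2 × 2` Hermitian matrix. -/
noncomputable def lambda2 {M : Matrix (Fin 2) (Fin 2) ℂ} (hM : M.IsHermitian) : ℝ :=
  min (hM.eigenvalues 0) (hM.eigenvalues 1)

/-!
Suppose `λ₂ ≤ 1 - ε₁³/9`. Since `‖Q‖ ≥ 1` and `Q ≤ P + Q`, the top eigenvalue `λ₁` of `P + Q`
is at least `1`, and exactly one eigenvalue `μ` of `Q` is at least `1` (otherwise `Q ≥ 1` would
force `λ₂ ≥ 1`). So both spectral projections have rank one: onto the top eigenvector `u` of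
`P + Q` and onto an eigenvector `w` of `Q`. Write `w = α u + β v` in the eigenbasis of `P + Q`.
Comparing `⟪w, (P + Q) w⟫ = λ₁ |α|² + λ₂ |β|²` with `⟪w, Q w⟫ = μ ≥ (1 - ε₁⁸) λ₁`, and using the
gap `λ₁ - λ₂ ≥ ε₁³ λ₁ / 9`, gives `|β|² ≤ 9 ε₁⁵` and `⟪w, P w⟫ ≤ ε₁⁸ λ₁`. Since `α u = w - β v`
and `P ≥ 0`, `|α|² ⟪u, P u⟫ ≤ 2 ⟪w, P w⟫ + 2 |β|² ⟪v, P v⟫ = O(ε₁⁵ λ₁)`, which contradicts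
`⟪u, P u⟫ ≥ ε² λ₁` for small `ε`.
-/

open Matrix
open scoped InnerProductSpace

section QuadForm

variable {𝕜 : Type*} [RCLike 𝕜] {n : Type*} [Fintype n]

noncomputable def quadForm (A : Matrix n n 𝕜) (x : EuclideanSpace 𝕜 n) : ℝ :=
  RCLike.re (star ⇑x ⬝ᵥ (A *ᵥ ⇑x))

lemma quadForm_add_left (A B : Matrix n n 𝕜) (x : EuclideanSpace 𝕜 n) :
    quadForm (A + B) x = quadForm A x + quadForm B x := by
  simp only [quadForm, add_mulVec, dotProduct_add, map_add]

lemma quadForm_smul (A : Matrix n n 𝕜) (c : 𝕜) (x : EuclideanSpace 𝕜 n) :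
    quadForm A (c • x) = ‖c‖ ^ 2 * quadForm A x := by
  simp only [quadForm, WithLp.ofLp_smul, star_smul, mulVec_smul, smul_dotProduct,
    dotProduct_smul, smul_eq_mul, RCLike.star_def]
  rw [← mul_assoc, RCLike.mul_conj, ← RCLike.ofReal_pow, RCLike.re_ofReal_mul]

lemma Matrix.PosSemidef.quadForm_nonneg {A : Matrix n n 𝕜} (hA : A.PosSemidef)
    (x : EuclideanSpace 𝕜 n) : 0 ≤ quadForm A x :=
  hA.re_dotProduct_nonneg x

lemma quadForm_add_add_quadForm_sub (A : Matrix n n 𝕜) (x y : EuclideanSpace 𝕜 n) :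
    quadForm A (x + y) + quadForm A (x - y) = 2 * quadForm A x + 2 * quadForm A y := by
  simp only [quadForm, WithLp.ofLp_add, WithLp.ofLp_sub, star_add, star_sub, mulVec_add,
    mulVec_sub, dotProduct_add, dotProduct_sub, add_dotProduct, sub_dotProduct, map_add, map_sub]
  ring

lemma Matrix.PosSemidef.quadForm_add_le {A : Matrix n n 𝕜} (hA : A.PosSemidef)
    (x y : EuclideanSpace 𝕜 n) : quadForm A (x + y) ≤ 2 * quadForm A x + 2 * quadForm A y := by
  linarith [quadForm_add_add_quadForm_sub A x y, hA.quadForm_nonneg (x - y)]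

variable [DecidableEq n] {A : Matrix n n 𝕜}

lemma Matrix.IsHermitian.quadForm_eigenvectorBasis (hA : A.IsHermitian) (i : n) :
    quadForm A (hA.eigenvectorBasis i) = hA.eigenvalues i :=
  (hA.eigenvalues_eq i).symm

lemma Matrix.IsHermitian.inner_eigenvectorBasis_mulVec (hA : A.IsHermitian) (i : n)
    (x : EuclideanSpace 𝕜 n) :
    ⟪hA.eigenvectorBasis i, WithLp.toLp 2 (A *ᵥ ⇑x)⟫_𝕜 =
      hA.eigenvalues i * ⟪hA.eigenvectorBasis i, x⟫_𝕜 := by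
  have hsymm := (isSymmetric_toEuclideanLin_iff.mpr hA) (hA.eigenvectorBasis i) x
  simp only [toLpLin_apply] at hsymm
  rw [← hsymm, hA.mulVec_eigenvectorBasis, WithLp.toLp_smul, WithLp.toLp_ofLp,
    RCLike.real_smul_eq_coe_smul (K := 𝕜), inner_smul_left, RCLike.conj_ofReal]

lemma Matrix.IsHermitian.quadForm_eq_sum (hA : A.IsHermitian) (x : EuclideanSpace 𝕜 n) :
    quadForm A x = ∑ i, hA.eigenvalues i * ‖⟪hA.eigenvectorBasis i, x⟫_𝕜‖ ^ 2 := by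
  have h : star ⇑x ⬝ᵥ (A *ᵥ ⇑x) = ⟪x, WithLp.toLp 2 (A *ᵥ ⇑x)⟫_𝕜 := dotProduct_comm _ _
  rw [quadForm, h, ← hA.eigenvectorBasis.sum_inner_mul_inner, map_sum]
  refine Finset.sum_congr rfl fun i _ => ?_
  rw [hA.inner_eigenvectorBasis_mulVec, ← inner_conj_symm, mul_left_comm, RCLike.conj_mul,
    ← RCLike.ofReal_pow, ← RCLike.ofReal_mul, RCLike.ofReal_re]

lemma Matrix.IsHermitian.quadForm_le_of_eigenvalues_le (hA : A.IsHermitian) {c : ℝ}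
    (h : ∀ i, hA.eigenvalues i ≤ c) (x : EuclideanSpace 𝕜 n) : quadForm A x ≤ c * ‖x‖ ^ 2 := by
  rw [hA.quadForm_eq_sum, ← hA.eigenvectorBasis.sum_sq_norm_inner_right, Finset.mul_sum]
  exact Finset.sum_le_sum fun i _ => mul_le_mul_of_nonneg_right (h i) (sq_nonneg _)

lemma Matrix.IsHermitian.le_quadForm_of_le_eigenvalues (hA : A.IsHermitian) {c : ℝ}
    (h : ∀ i, c ≤ hA.eigenvalues i) (x : EuclideanSpace 𝕜 n) : c * ‖x‖ ^ 2 ≤ quadForm A x := by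
  rw [hA.quadForm_eq_sum, ← hA.eigenvectorBasis.sum_sq_norm_inner_right, Finset.mul_sum]
  exact Finset.sum_le_sum fun i _ => mul_le_mul_of_nonneg_right (h i) (sq_nonneg _)

end QuadForm

open scoped Matrix.Norms.L2Operator in
lemma Matrix.IsHermitian.l2_opNorm_eq {𝕜 : Type*} [RCLike 𝕜] {n : Type*} [Fintype n]
    [DecidableEq n] {A : Matrix n n 𝕜} (hA : A.IsHermitian) : ‖A‖ = ‖hA.eigenvalues‖ := by
  conv_lhs => rw [hA.spectral_theorem]
  rw [Unitary.conjStarAlgAut_apply,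
    CStarRing.norm_mul_mem_unitary _ (Unitary.star_mem hA.eigenvectorUnitary.2),
    CStarRing.norm_coe_unitary_mul, l2_opNorm_diagonal]
  simp [Pi.norm_def]

lemma trace_specProj_mul {n : ℕ} {M : Matrix (Fin n) (Fin n) ℂ} (hM : M.IsHermitian)
    (N : Matrix (Fin n) (Fin n) ℂ) :
    (specProj hM * N).trace = ∑ i ∈ Finset.univ.filter (fun i => 1 ≤ hM.eigenvalues i),
      star ⇑(hM.eigenvectorBasis i) ⬝ᵥ (N *ᵥ ⇑(hM.eigenvectorBasis i)) := by
  rw [specProj, Finset.sum_mul, trace_sum]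
  refine Finset.sum_congr rfl fun i _ => ?_
  rw [vecMulVec_mul, trace_vecMulVec, dotProduct_comm, dotProduct_mulVec]

lemma re_trace_specProj_mul_of_filter_eq {n : ℕ} {M : Matrix (Fin n) (Fin n) ℂ}
    (hM : M.IsHermitian) {i : Fin n}
    (hi : Finset.univ.filter (fun i => 1 ≤ hM.eigenvalues i) = {i})
    (N : Matrix (Fin n) (Fin n) ℂ) :
    ((specProj hM * N).trace).re = quadForm N (hM.eigenvectorBasis i) := by
  rw [trace_specProj_mul, hi, Finset.sum_singleton, quadForm, RCLike.re_to_complex]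

lemma Fin.univ_eq_pair {i j : Fin 2} (hij : i ≠ j) : (Finset.univ : Finset (Fin 2)) = {i, j} := by
  ext k
  simp only [Finset.mem_univ, Finset.mem_insert, Finset.mem_singleton, true_iff]
  omega

lemma Fin.filter_univ_eq_singleton {p : Fin 2 → Prop} [DecidablePred p] {i j : Fin 2}
    (hi : p i) (hj : ¬ p j) : Finset.univ.filter p = {i} := by
  have hij : i ≠ j := by rintro rfl; exact hj hi
  rw [Fin.univ_eq_pair hij, Finset.filter_insert, Finset.filter_singleton]
  simp [hi, hj]

lemma OrthonormalBasis.sq_norm_inner_add_sq_norm_inner {𝕜 E : Type*} [RCLike 𝕜]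
    [NormedAddCommGroup E] [InnerProductSpace 𝕜 E] (b : OrthonormalBasis (Fin 2) 𝕜 E)
    {i j : Fin 2} (hij : i ≠ j) (x : E) :
    ‖⟪b i, x⟫_𝕜‖ ^ 2 + ‖⟪b j, x⟫_𝕜‖ ^ 2 = ‖x‖ ^ 2 := by
  rw [← b.sum_sq_norm_inner_right, Fin.univ_eq_pair hij, Finset.sum_pair hij]

lemma OrthonormalBasis.inner_smul_add_inner_smul {𝕜 E : Type*} [RCLike 𝕜]
    [NormedAddCommGroup E] [InnerProductSpace 𝕜 E] (b : OrthonormalBasis (Fin 2) 𝕜 E)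
    {i j : Fin 2} (hij : i ≠ j) (x : E) :
    ⟪b i, x⟫_𝕜 • b i + ⟪b j, x⟫_𝕜 • b j = x := by
  simpa only [Fin.univ_eq_pair hij, Finset.sum_pair hij] using b.sum_repr' x

section TwoByTwo

variable {𝕜 : Type*} [RCLike 𝕜] {A : Matrix (Fin 2) (Fin 2) 𝕜}

lemma Matrix.IsHermitian.quadForm_eq_of_ne (hA : A.IsHermitian) {i j : Fin 2} (hij : i ≠ j)
    (x : EuclideanSpace 𝕜 (Fin 2)) :
    quadForm A x = hA.eigenvalues i * ‖⟪hA.eigenvectorBasis i, x⟫_𝕜‖ ^ 2 +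
      hA.eigenvalues j * ‖⟪hA.eigenvectorBasis j, x⟫_𝕜‖ ^ 2 := by
  rw [hA.quadForm_eq_sum, Fin.univ_eq_pair hij, Finset.sum_pair hij]

lemma Matrix.PosSemidef.sq_norm_inner_mul_quadForm_le (hA : A.PosSemidef)
    (b : OrthonormalBasis (Fin 2) 𝕜 (EuclideanSpace 𝕜 (Fin 2))) {i j : Fin 2} (hij : i ≠ j)
    (x : EuclideanSpace 𝕜 (Fin 2)) :
    ‖⟪b i, x⟫_𝕜‖ ^ 2 * quadForm A (b i) ≤
      2 * quadForm A x + 2 * (‖⟪b j, x⟫_𝕜‖ ^ 2 * quadForm A (b j)) := by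
  have hx : ⟪b i, x⟫_𝕜 • b i = x + (-⟪b j, x⟫_𝕜) • b j := by
    rw [neg_smul, ← sub_eq_add_neg, eq_sub_iff_add_eq]
    exact b.inner_smul_add_inner_smul hij x
  rw [← quadForm_smul, hx, ← norm_neg ⟪b j, x⟫_𝕜, ← quadForm_smul]
  exact hA.quadForm_add_le _ _

end TwoByTwo

/-- In the application `l₁, l₂` are the eigenvalues of `P + Q` with eigenvectors `u, v`,
`w = α u + β v` is the top eigenvector of `Q` with eigenvalue `μ`, `a = |α|²`, `b = |β|²`,
`p = ⟪u, P u⟫`, `q = ⟪v, P v⟫` and `t = ⟪w, P w⟫`. -/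
lemma two_by_two_inequalities_inconsistent {ε ε₁ l₁ l₂ μ a b p q t : ℝ}
    (hε₁ : 0 < ε₁) (hε₁ε : ε₁ ≤ ε) (hε : ε < 1 / 5) (hl₁ : 1 ≤ l₁)
    (hl₂ : l₂ ≤ 1 - ε₁ ^ 3 / 9) (hb : 0 ≤ b) (hab : a + b = 1) (ht : 0 ≤ t) (hq : q ≤ l₂)
    (hsplit : l₁ * a + l₂ * b = t + μ) (hpar : a * p ≤ 2 * t + 2 * (b * q))
    (hp : ε ^ 2 * l₁ ≤ p) (hμ : (1 - ε₁ ^ 8) * l₁ ≤ μ) : False := by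
  obtain rfl : a = 1 - b := by linarith
  have hε₁_le_one : ε₁ ≤ 1 := by linarith
  have hδ : ε₁ ^ 3 / 9 ≤ 1 := by nlinarith [pow_le_one₀ hε₁.le hε₁_le_one (n := 3)]
  have hl₂_le_one : l₂ ≤ 1 := by linarith [pow_pos hε₁ 3]
  have hdeficit : t + b * (l₁ - l₂) ≤ ε₁ ^ 8 * l₁ := by linarith
  have hgap : ε₁ ^ 3 / 9 * l₁ ≤ l₁ - l₂ := by
    nlinarith [mul_nonneg (sub_nonneg.2 hl₁) (sub_nonneg.2 hδ)]
  have ht' : t ≤ ε₁ ^ 8 * l₁ := by nlinarith [mul_nonneg hb (by linarith : 0 ≤ l₁ - l₂)]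
  have hb' : b ≤ 9 * ε₁ ^ 5 := by
    have h : b * (ε₁ ^ 3 / 9) * l₁ ≤ ε₁ ^ 8 * l₁ := by
      nlinarith [mul_nonneg hb (sub_nonneg.2 hgap)]
    have h' : b * ε₁ ^ 3 ≤ 9 * ε₁ ^ 5 * ε₁ ^ 3 := by
      nlinarith [le_of_mul_le_mul_right h (by linarith)]
    exact le_of_mul_le_mul_right h' (by positivity)
  have hε₁5 : ε₁ ^ 5 ≤ (1 / 5) ^ 5 := pow_le_pow_left₀ hε₁.le (by linarith) 5
  have ha : 1 / 2 ≤ 1 - b := by linarith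
  have hp0 : 0 ≤ p := by nlinarith
  have hp' : p ≤ 4 * ε₁ ^ 8 * l₁ + 36 * ε₁ ^ 5 := by
    nlinarith [mul_le_mul_of_nonneg_left (hq.trans hl₂_le_one) hb]
  have h85 : ε₁ ^ 8 ≤ ε₁ ^ 5 := pow_le_pow_of_le_one hε₁.le hε₁_le_one (by norm_num)
  have h5 : ε₁ ^ 5 ≤ ε ^ 5 := pow_le_pow_left₀ hε₁.le hε₁ε 5
  have hε2 : ε ^ 2 ≤ 40 * ε ^ 5 := by nlinarith
  have hε3 : ε ^ 3 < 1 / 125 := by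
    have := pow_lt_pow_left₀ hε (by linarith) three_ne_zero
    norm_num at this
    linarith
  nlinarith [pow_pos (hε₁.trans_le hε₁ε) 2]

section Setup

variable {n : ℕ} {P Q : Matrix (Fin n) (Fin n) ℂ}

open scoped Matrix.Norms.L2Operator in
lemma Matrix.PosSemidef.exists_one_le_eigenvalues (hQ : Q.PosSemidef) (h : 1 ≤ opNorm Q) :
    ∃ k, 1 ≤ hQ.1.eigenvalues k := by
  by_contra! hlt
  have hnorm : ‖hQ.1.eigenvalues‖ < 1 := (pi_norm_lt_iff one_pos).2 fun k => by
    rw [Real.norm_of_nonneg (hQ.eigenvalues_nonneg k)]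
    exact hlt k
  have hQnorm : opNorm Q = ‖hQ.1.eigenvalues‖ := hQ.1.l2_opNorm_eq
  linarith

lemma exists_one_le_eigenvalues_add (hP : P.PosSemidef) (hQ : Q.PosSemidef)
    (hPQ : (P + Q).IsHermitian) {k : Fin n} (hk : 1 ≤ hQ.1.eigenvalues k) :
    ∃ i, 1 ≤ hPQ.eigenvalues i := by
  have : Nonempty (Fin n) := ⟨k⟩
  obtain ⟨i, hi⟩ := Finite.exists_max hPQ.eigenvalues
  refine ⟨i, ?_⟩
  have h := hPQ.quadForm_le_of_eigenvalues_le hi (hQ.1.eigenvectorBasis k)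
  rw [quadForm_add_left, hQ.1.quadForm_eigenvectorBasis, hQ.1.eigenvectorBasis.orthonormal.1 k,
    one_pow, mul_one] at h
  linarith [hP.quadForm_nonneg (hQ.1.eigenvectorBasis k)]

lemma quadForm_left_le_eigenvalues_add (hQ : Q.PosSemidef) (hPQ : (P + Q).IsHermitian)
    (j : Fin n) : quadForm P (hPQ.eigenvectorBasis j) ≤ hPQ.eigenvalues j := by
  rw [← hPQ.quadForm_eigenvectorBasis, quadForm_add_left]
  linarith [hQ.quadForm_nonneg (hPQ.eigenvectorBasis j)]

lemma quadForm_right_le_eigenvalues_add (hP : P.PosSemidef) (hPQ : (P + Q).IsHermitian)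
    (j : Fin n) : quadForm Q (hPQ.eigenvectorBasis j) ≤ hPQ.eigenvalues j := by
  rw [← hPQ.quadForm_eigenvectorBasis, quadForm_add_left]
  linarith [hP.quadForm_nonneg (hPQ.eigenvectorBasis j)]

end Setup

lemma filter_one_le_eigenvalues_eq_singleton {P Q : Matrix (Fin 2) (Fin 2) ℂ}
    (hP : P.PosSemidef) (hQ : Q.PosSemidef) (hPQ : (P + Q).IsHermitian) {j k : Fin 2}
    (hj : hPQ.eigenvalues j < 1) (hk : 1 ≤ hQ.1.eigenvalues k) :
    Finset.univ.filter (fun i => 1 ≤ hQ.1.eigenvalues i) = {k} := by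
  obtain ⟨l, hl⟩ : ∃ l, hQ.1.eigenvalues l < 1 := by
    by_contra! h
    have h' := hQ.1.le_quadForm_of_le_eigenvalues h (hPQ.eigenvectorBasis j)
    rw [hPQ.eigenvectorBasis.orthonormal.1 j, one_pow, mul_one] at h'
    linarith [quadForm_right_le_eigenvalues_add hP hPQ j]
  exact Fin.filter_univ_eq_singleton hk hl.not_ge

/-- **the 2×2 lemma.** For all sufficiently small `ε > 0`
(uniformly: there is a threshold `c > 0`), whenever `0 < ε₁ ≤ ε`
(`ε₁ = 3ε / ln n` in the application) and `P, Q` are `2 × 2` positive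
semidefinite matrices with `‖Q‖ ≥ 1`, `‖P+Q‖ ≤ 1+ε₁`, `λ₂(P+Q) < 1`,
`tr(Π^{P+Q} P) ≥ ε² tr(Π^{P+Q}(P+Q))` and
`tr(Π^Q Q) ≥ (1-ε₁⁸) tr(Π^{P+Q}(P+Q))`, one has `λ₂(P+Q) > 1 - ε₁³/9`. -/
theorem two_by_two_lemma :
    ∃ c : ℝ, 0 < c ∧
      ∀ (ε ε₁ : ℝ), 0 < ε → ε < c → 0 < ε₁ → ε₁ ≤ ε →
      ∀ (P Q : Matrix (Fin 2) (Fin 2) ℂ)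
        (hP : P.PosSemidef) (hQ : Q.PosSemidef) (hPQ : (P + Q).IsHermitian),
        1 ≤ opNorm Q →
        opNorm (P + Q) ≤ 1 + ε₁ →
        lambda2 hPQ < 1 →
        ε ^ 2 * ((specProj hPQ * (P + Q)).trace).re ≤ ((specProj hPQ * P).trace).re →
        (1 - ε₁ ^ 8) * ((specProj hPQ * (P + Q)).trace).re ≤
          ((specProj hQ.1 * Q).trace).re →
        1 - ε₁ ^ 3 / 9 < lambda2 hPQ := by
  refine ⟨1 / 5, by norm_num, fun ε ε₁ _ hε hε₁ hε₁ε P Q hP hQ hPQ hQ1 _ _ hTrP hTrQ => ?_⟩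
  by_contra! hlow
  obtain ⟨j, hj⟩ : ∃ j, hPQ.eigenvalues j ≤ 1 - ε₁ ^ 3 / 9 := by
    rcases min_le_iff.1 hlow with h | h
    exacts [⟨0, h⟩, ⟨1, h⟩]
  have hj1 : hPQ.eigenvalues j < 1 := by linarith [pow_pos hε₁ 3]
  obtain ⟨k, hk⟩ := hQ.exists_one_le_eigenvalues hQ1
  obtain ⟨i, hi⟩ := exists_one_le_eigenvalues_add hP hQ hPQ hk
  have hij : i ≠ j := by rintro rfl; linarith
  have hproj :=
    re_trace_specProj_mul_of_filter_eq hPQ (Fin.filter_univ_eq_singleton hi hj1.not_ge)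
  have hprojQ := re_trace_specProj_mul_of_filter_eq hQ.1
    (filter_one_le_eigenvalues_eq_singleton hP hQ hPQ hj1 hk)
  rw [hproj, hproj, hPQ.quadForm_eigenvectorBasis] at hTrP
  rw [hproj, hprojQ, hPQ.quadForm_eigenvectorBasis, hQ.1.quadForm_eigenvectorBasis] at hTrQ
  set w := hQ.1.eigenvectorBasis k
  have hab := hPQ.eigenvectorBasis.sq_norm_inner_add_sq_norm_inner hij w
  rw [hQ.1.eigenvectorBasis.orthonormal.1 k, one_pow] at hab
  have hsplit := hPQ.quadForm_eq_of_ne hij w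
  rw [quadForm_add_left, hQ.1.quadForm_eigenvectorBasis] at hsplit
  exact two_by_two_inequalities_inconsistent hε₁ hε₁ε hε hi hj (sq_nonneg _) hab
    (hP.quadForm_nonneg w) (quadForm_left_le_eigenvalues_add hQ hPQ j) hsplit.symm
    (hP.sq_norm_inner_mul_quadForm_le hPQ.eigenvectorBasis hij w) hTrP hTrQ
end

section
/- In the Jordan decomposition of the space with respect to Π^B and Π^{A+B} (A, B positive semidefinite with the large-eigenvalue conditions of the main lemma), Π^{A+B} does not vanish on any of the one- or two-dimensional invariant subspaces Vᵢ; consequently tr Π^{Aᵢ+Bᵢ}(Aᵢ+Bᵢ) ≥ 1 for every i. -/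
/-!
If `Π^{A+B}` vanished on `Vᵢ`, then `Π^B` would not, and a nonzero `v ∈ Vᵢ` fixed by `Π^B` would
satisfy `⟨v, B v⟩ ≥ ‖v‖²` while, being killed by `Π^{A+B}`, it lies in the span of eigenvectors of
`A + B` with eigenvalues `< 1`, so `⟨v, (A + B) v⟩ < ‖v‖²`; this contradicts `A ≥ 0`.
Likewise a nonzero `v ∈ Vᵢ` fixed by `Π^{A+B}` has `⟨v, Vᵢ(A+B)Vᵢ v⟩ = ⟨v, (A+B) v⟩ ≥ ‖v‖²`, so
`M = Vᵢ(A+B)Vᵢ` has an eigenvalue `≥ 1`, and `tr Π^M M` is the sum of those eigenvalues.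
-/

open scoped ComplexOrder

open Matrix

namespace Matrix

variable {m R : Type*} [Fintype m]

theorem exists_ne_zero_mulVec_eq_self_of_commute [Semiring R]
    {P V : Matrix m m R} (hPV : P * V ≠ 0) (hP : IsIdempotentElem P) (hV : IsIdempotentElem V)
    (hcomm : Commute P V) : ∃ v ≠ 0, P *ᵥ v = v ∧ V *ᵥ v = v := by
  obtain ⟨w, hw⟩ : ∃ w, (P * V) *ᵥ w ≠ 0 := by
    by_contra! h
    exact hPV (ext_iff_mulVec.2 fun w => by rw [h, zero_mulVec])
  refine ⟨(P * V) *ᵥ w, hw, ?_, ?_⟩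
  · rw [mulVec_mulVec, ← mul_assoc, hP.eq]
  · rw [mulVec_mulVec, ← mul_assoc, ← hcomm.eq, mul_assoc, hV.eq]

theorem star_dotProduct_mul_mul_mulVec_of_mulVec_eq_self [Semiring R] [StarRing R]
    {V : Matrix m m R} (hV : V.IsHermitian) (N : Matrix m m R) {v : m → R} (hv : V *ᵥ v = v) :
    star v ⬝ᵥ ((V * N * V) *ᵥ v) = star v ⬝ᵥ (N *ᵥ v) := by
  rw [← mulVec_mulVec, ← mulVec_mulVec, hv, dotProduct_mulVec, ← hV.eq, ← star_mulVec, hv]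

theorem re_star_dotProduct_mul_diagonal_mul_star_mulVec [DecidableEq m] (U : Matrix m m ℂ)
    (d : m → ℝ) (v : m → ℂ) :
    (star v ⬝ᵥ ((U * diagonal (fun j => (d j : ℂ)) * star U) *ᵥ v)).re
      = ∑ j, d j * Complex.normSq ((star U *ᵥ v) j) := by
  have hrow : star v ᵥ* U = star (star U *ᵥ v) := by
    rw [star_mulVec, star_eq_conjTranspose, conjTranspose_conjTranspose]
  rw [← mulVec_mulVec, ← mulVec_mulVec, dotProduct_mulVec, hrow]
  simp only [dotProduct, mulVec_diagonal, Pi.star_apply, Complex.re_sum]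
  refine Finset.sum_congr rfl fun j _ => ?_
  rw [Complex.star_def, Complex.normSq_apply]
  simp only [Complex.mul_re, Complex.mul_im, Complex.conj_re, Complex.conj_im, Complex.ofReal_re,
    Complex.ofReal_im]
  ring

theorem re_star_dotProduct_self_eq_sum_normSq [DecidableEq m] {U : Matrix m m ℂ}
    (hU : U ∈ unitaryGroup m ℂ) (v : m → ℂ) :
    (star v ⬝ᵥ v).re = ∑ j, Complex.normSq ((star U *ᵥ v) j) := by
  simpa [Unitary.mul_star_self_of_mem hU] using
    re_star_dotProduct_mul_diagonal_mul_star_mulVec U (fun _ => 1) v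

end Matrix

section specProj

variable {n : ℕ} {M : Matrix (Fin n) (Fin n) ℂ} (hM : M.IsHermitian)

theorem specProj_eq_eigenvectorUnitary_mul_diagonal_mul_star :
    specProj hM = (hM.eigenvectorUnitary : Matrix (Fin n) (Fin n) ℂ) *
      diagonal (fun j => if 1 ≤ hM.eigenvalues j then 1 else 0) *
      star (hM.eigenvectorUnitary : Matrix (Fin n) (Fin n) ℂ) := by
  ext a b
  rw [mul_apply]
  simp only [specProj, Matrix.sum_apply, vecMulVec_apply, mul_diagonal, star_apply,
    IsHermitian.eigenvectorUnitary_apply]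
  rw [Finset.sum_filter]
  refine Finset.sum_congr rfl fun j _ => ?_
  split_ifs <;> simp [mul_comm]

theorem isIdempotentElem_specProj : IsIdempotentElem (specProj hM) := by
  rw [IsIdempotentElem, specProj_eq_eigenvectorUnitary_mul_diagonal_mul_star]
  simp only [mul_assoc]
  rw [← mul_assoc (star _), Unitary.coe_star_mul_self, one_mul, ← mul_assoc (diagonal _),
    diagonal_mul_diagonal]
  congr 3
  funext j
  split_ifs <;> simp

theorem star_eigenvectorUnitary_mulVec_specProj_mulVec (v : Fin n → ℂ) (j : Fin n) :
    (star (hM.eigenvectorUnitary : Matrix (Fin n) (Fin n) ℂ) *ᵥ (specProj hM *ᵥ v)) j =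
      if 1 ≤ hM.eigenvalues j then (star (hM.eigenvectorUnitary : Matrix (Fin n) (Fin n) ℂ) *ᵥ v) j
      else 0 := by
  rw [specProj_eq_eigenvectorUnitary_mul_diagonal_mul_star, mulVec_mulVec, ← mul_assoc,
    ← mul_assoc, Unitary.coe_star_mul_self, one_mul, ← mulVec_mulVec, mulVec_diagonal]
  split_ifs <;> simp

theorem re_star_dotProduct_mulVec_eq_sum_eigenvalues (v : Fin n → ℂ) :
    (star v ⬝ᵥ (M *ᵥ v)).re = ∑ j, hM.eigenvalues j *
      Complex.normSq ((star (hM.eigenvectorUnitary : Matrix (Fin n) (Fin n) ℂ) *ᵥ v) j) := by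
  conv_lhs => rw [hM.spectral_theorem, Unitary.conjStarAlgAut_apply]
  exact re_star_dotProduct_mul_diagonal_mul_star_mulVec _ _ v

theorem re_star_dotProduct_self_le_of_specProj_mulVec_eq_self {v : Fin n → ℂ}
    (hv : specProj hM *ᵥ v = v) : (star v ⬝ᵥ v).re ≤ (star v ⬝ᵥ (M *ᵥ v)).re := by
  have hc (j : Fin n) (hj : ¬ 1 ≤ hM.eigenvalues j) :
      (star (hM.eigenvectorUnitary : Matrix (Fin n) (Fin n) ℂ) *ᵥ v) j = 0 := by
    have := star_eigenvectorUnitary_mulVec_specProj_mulVec hM v j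
    rwa [hv, if_neg hj] at this
  rw [re_star_dotProduct_self_eq_sum_normSq hM.eigenvectorUnitary.2,
    re_star_dotProduct_mulVec_eq_sum_eigenvalues hM]
  refine Finset.sum_le_sum fun j _ => ?_
  by_cases hj : 1 ≤ hM.eigenvalues j
  · exact le_mul_of_one_le_left (Complex.normSq_nonneg _) hj
  · simp [hc j hj]

theorem specProj_mulVec_ne_zero {v : Fin n → ℂ} (hv : v ≠ 0)
    (hle : (star v ⬝ᵥ v).re ≤ (star v ⬝ᵥ (M *ᵥ v)).re) : specProj hM *ᵥ v ≠ 0 := by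
  intro h0
  set c := star (hM.eigenvectorUnitary : Matrix (Fin n) (Fin n) ℂ) *ᵥ v with hc_def
  have hc (j : Fin n) (hj : 1 ≤ hM.eigenvalues j) : c j = 0 := by
    have := star_eigenvectorUnitary_mulVec_specProj_mulVec hM v j
    rwa [h0, mulVec_zero, if_pos hj, eq_comm] at this
  obtain ⟨j₀, hj₀⟩ : ∃ j, c j ≠ 0 := by
    by_contra! hc_zero
    apply hv
    rw [← one_mulVec v, ← Unitary.mul_star_self_of_mem hM.eigenvectorUnitary.2, ← mulVec_mulVec,
      ← hc_def, show c = 0 from funext hc_zero, mulVec_zero]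
  refine hle.not_gt ?_
  rw [re_star_dotProduct_self_eq_sum_normSq hM.eigenvectorUnitary.2,
    re_star_dotProduct_mulVec_eq_sum_eigenvalues hM, ← hc_def]
  refine Finset.sum_lt_sum (fun j _ => ?_) ⟨j₀, Finset.mem_univ _, ?_⟩
  · by_cases hj : 1 ≤ hM.eigenvalues j
    · simp [hc j hj]
    · exact mul_le_of_le_one_left (Complex.normSq_nonneg _) (not_le.1 hj).le
  · exact mul_lt_of_lt_one_left (Complex.normSq_pos.2 hj₀) (not_le.1 fun hj => hj₀ (hc j₀ hj))

theorem one_le_re_trace_specProj_mul (h : specProj hM ≠ 0) :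
    1 ≤ ((specProj hM * M).trace).re := by
  set S := Finset.univ.filter (fun j => 1 ≤ hM.eigenvalues j)
  have hS : S.Nonempty := Finset.nonempty_of_sum_ne_zero h
  have htrace : ((specProj hM * M).trace).re = ∑ j ∈ S, hM.eigenvalues j := by
    rw [specProj, Finset.sum_mul, trace_sum, Complex.re_sum]
    refine Finset.sum_congr rfl fun j _ => ?_
    rw [vecMulVec_mul, trace_vecMulVec, dotProduct_comm, ← dotProduct_mulVec, hM.eigenvalues_eq]
    rfl
  rw [htrace]
  calc (1 : ℝ) ≤ S.card := by exact_mod_cast hS.card_pos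
    _ = ∑ j ∈ S, (1 : ℝ) := by simp
    _ ≤ ∑ j ∈ S, hM.eigenvalues j := Finset.sum_le_sum fun j hj => (Finset.mem_filter.1 hj).2

end specProj

theorem specProj_nonvanishing_general
    {n k : ℕ} (A B : Matrix (Fin n) (Fin n) ℂ)
    (hA : A.PosSemidef) (hB : B.PosSemidef) (hAB : (A + B).IsHermitian)
    (V : Fin k → Matrix (Fin n) (Fin n) ℂ)
    (hV : ∀ i, (V i).IsHermitian ∧ V i * V i = V i)
    (hinvB : ∀ i, specProj hB.1 * V i = V i * specProj hB.1)
    (hinvAB : ∀ i, specProj hAB * V i = V i * specProj hAB)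
    (hnz : ∀ i, specProj hB.1 * V i ≠ 0 ∨ specProj hAB * V i ≠ 0)
    (hABi : ∀ i, (V i * (A + B) * V i).IsHermitian) :
    ∀ i, specProj hAB * V i ≠ 0 ∧
      1 ≤ ((specProj (hABi i) * (V i * (A + B) * V i)).trace).re := by
  intro i
  obtain ⟨hVi_herm, hVi_idem⟩ := hV i
  have hAB_ne : specProj hAB * V i ≠ 0 := by
    intro h0
    obtain ⟨v, hv, hBv, hVv⟩ := exists_ne_zero_mulVec_eq_self_of_commute
      ((hnz i).resolve_right (not_not.2 h0)) (isIdempotentElem_specProj hB.1) hVi_idem (hinvB i)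
    refine specProj_mulVec_ne_zero hAB hv ?_ (by rw [← hVv, mulVec_mulVec, h0, zero_mulVec])
    have hA_nonneg : 0 ≤ (star v ⬝ᵥ (A *ᵥ v)).re :=
      (Complex.nonneg_iff.1 (hA.dotProduct_mulVec_nonneg v)).1
    calc (star v ⬝ᵥ v).re ≤ (star v ⬝ᵥ (B *ᵥ v)).re :=
          re_star_dotProduct_self_le_of_specProj_mulVec_eq_self hB.1 hBv
      _ ≤ (star v ⬝ᵥ ((A + B) *ᵥ v)).re := by
          rw [add_mulVec, dotProduct_add, Complex.add_re]
          linarith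
  refine ⟨hAB_ne, one_le_re_trace_specProj_mul (hABi i) fun h0 => ?_⟩
  obtain ⟨v, hv, hABv, hVv⟩ := exists_ne_zero_mulVec_eq_self_of_commute hAB_ne
    (isIdempotentElem_specProj hAB) hVi_idem (hinvAB i)
  refine specProj_mulVec_ne_zero (hABi i) hv ?_ (by rw [h0, zero_mulVec])
  rw [star_dotProduct_mul_mul_mulVec_of_mulVec_eq_self hVi_herm _ hVv]
  exact re_star_dotProduct_self_le_of_specProj_mulVec_eq_self hAB hABv

/-- In the Jordan decomposition of the space with respect to
`Π^B` and `Π^{A+B}` (`A, B` positive semidefinite, the space decomposing into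
mutually orthogonal subspaces `Vᵢ` invariant under both projectors — with at
least one of the two not vanishing on each `Vᵢ` — and `W` where both vanish),
the projector `Π^{A+B}` does not vanish on any `Vᵢ`; consequently
`tr Π^{Aᵢ+Bᵢ}(Aᵢ+Bᵢ) ≥ 1` for every `i`, where `Aᵢ = VᵢAVᵢ`, `Bᵢ = VᵢBVᵢ`. -/
theorem specProj_nonvanishing
    {n k : ℕ} (A B : Matrix (Fin n) (Fin n) ℂ)
    (hA : A.PosSemidef) (hB : B.PosSemidef) (hAB : (A + B).IsHermitian)
    (V : Fin k → Matrix (Fin n) (Fin n) ℂ) (W : Matrix (Fin n) (Fin n) ℂ)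
    (hV : ∀ i, (V i).IsHermitian ∧ V i * V i = V i)
    (hW : W.IsHermitian ∧ W * W = W)
    (horth : ∀ i j, i ≠ j → V i * V j = 0)
    (horthW : ∀ i, V i * W = 0)
    (hsum : ∑ i, V i + W = 1)
    (hinvB : ∀ i, specProj hB.1 * V i = V i * specProj hB.1)
    (hinvAB : ∀ i, specProj hAB * V i = V i * specProj hAB)
    (hWB : specProj hB.1 * W = 0)
    (hWAB : specProj hAB * W = 0)
    (hnz : ∀ i, specProj hB.1 * V i ≠ 0 ∨ specProj hAB * V i ≠ 0)
    (hABi : ∀ i, (V i * (A + B) * V i).IsHermitian) :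
    ∀ i, specProj hAB * V i ≠ 0 ∧
      1 ≤ ((specProj (hABi i) * (V i * (A + B) * V i)).trace).re :=
  specProj_nonvanishing_general A B hA hB hAB V hV hinvB hinvAB hnz hABi
end
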